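/- Let Q be a symmetric n×n real matrix, c, v ∈ R^n, β > 0, and ζ = (σ,τ) with G(σ) = Q + 2 Diag(σ) positive definite and τ > 0. If z̄ = G(σ)⁻¹(c − τ v + σ) satisfies z̄ ∈ {0,1}^n and vᵀ z̄ = V_c and the pair (z̄, ζ) is a critical (KKT) point of the total complementary function Ξ_β, then z̄ is a global minimizer of P_q(z) = (1/2) zᵀ Q z − cᵀ z over the knapsack set {z ∈ {0,1}^n : vᵀ z ≤ V_c}. -/

import Mathlib

open Matrix

/-!
Stationarity in `σ` reads `σᵢ = β (z̄ᵢ² - z̄ᵢ)`, which vanishes on a binary point, so `σ = 0`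
and `G(σ) = Q`. Then `Q` is positive definite and `Q z̄ = c - τ v`, so the convexity inequality
`½ zᵀQz ≥ ½ z̄ᵀQz̄ + (Qz̄)ᵀ(z - z̄)` gives `P_q(z) - P_q(z̄) ≥ τ (vᵀz̄ - vᵀz) = τ (V_c - vᵀz) ≥ 0`
for every feasible `z`.
-/

lemma eq_zero_of_sq_sub_self_sub_div_eq_zero {β s x : ℝ} (hβ : β ≠ 0) (hx : x = 0 ∨ x = 1)
    (h : x ^ 2 - x - s / β = 0) : s = 0 := by
  have hsβ : s / β = 0 := by rcases hx with rfl | rfl <;> linarith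
  simpa [hβ] using hsβ

namespace Matrix.PosSemidef

variable {ι : Type*} [Fintype ι] {Q : Matrix ι ι ℝ}

lemma dotProduct_mulVec_comm (hQ : Q.PosSemidef) (x y : ι → ℝ) :
    x ⬝ᵥ Q *ᵥ y = y ⬝ᵥ Q *ᵥ x := by
  rw [dotProduct_mulVec, ← mulVec_transpose, dotProduct_comm,
    ← conjTranspose_eq_transpose_of_trivial, hQ.isHermitian.eq]

lemma quadratic_tangent_le (hQ : Q.PosSemidef) (x y : ι → ℝ) :
    (1 / 2) * (y ⬝ᵥ Q *ᵥ y) + (Q *ᵥ y) ⬝ᵥ (x - y) ≤ (1 / 2) * (x ⬝ᵥ Q *ᵥ x) := by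
  have hnonneg : 0 ≤ (x - y) ⬝ᵥ Q *ᵥ (x - y) := by
    simpa using hQ.dotProduct_mulVec_nonneg (x - y)
  have hexpand : (x - y) ⬝ᵥ Q *ᵥ (x - y) =
      x ⬝ᵥ Q *ᵥ x - 2 * (x ⬝ᵥ Q *ᵥ y) + y ⬝ᵥ Q *ᵥ y := by
    rw [mulVec_sub, sub_dotProduct, dotProduct_sub, dotProduct_sub, hQ.dotProduct_mulVec_comm y x]
    ring
  have hlin : (Q *ᵥ y) ⬝ᵥ (x - y) = x ⬝ᵥ Q *ᵥ y - y ⬝ᵥ Q *ᵥ y := by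
    rw [dotProduct_sub, dotProduct_comm _ x, dotProduct_comm _ y]
  linarith

lemma quadratic_le_of_kkt (hQ : Q.PosSemidef) {c v x : ι → ℝ} {τ b : ℝ} (hτ : 0 ≤ τ)
    (hstat : Q *ᵥ x = c - τ • v) (hactive : v ⬝ᵥ x = b) {z : ι → ℝ} (hz : v ⬝ᵥ z ≤ b) :
    (1 / 2) * (x ⬝ᵥ Q *ᵥ x) - c ⬝ᵥ x ≤ (1 / 2) * (z ⬝ᵥ Q *ᵥ z) - c ⬝ᵥ z := by
  have htangent := hQ.quadratic_tangent_le z x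
  have hlin : (Q *ᵥ x) ⬝ᵥ (z - x) = c ⬝ᵥ z - c ⬝ᵥ x - τ * (v ⬝ᵥ z - b) := by
    rw [hstat, ← hactive, sub_dotProduct, smul_dotProduct, dotProduct_sub, dotProduct_sub,
      smul_eq_mul]
  linarith [mul_le_mul_of_nonneg_left hz hτ]

end Matrix.PosSemidef

theorem kkt_point_global_min_knapsack_general (n : ℕ) (β : ℝ) (hβ : 0 < β)
    (Q : Matrix (Fin n) (Fin n) ℝ)
    (c v σ : Fin n → ℝ) (τ Vc : ℝ)
    (G : Matrix (Fin n) (Fin n) ℝ) (hG : G = Q + 2 • Matrix.diagonal σ)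
    (hpd : G.PosDef)
    (ψ : Fin n → ℝ) (hψ : ψ = fun i => c i - τ * v i + σ i)
    (zbar : Fin n → ℝ)
    (hbin : ∀ i, zbar i = 0 ∨ zbar i = 1)
    (hvol : v ⬝ᵥ zbar = Vc)
    -- KKT stationarity in z : ∇_z Ξ_β = 0
    (hstat_z : G.mulVec zbar = ψ)
    -- KKT stationarity in σ : ∇_σ Ξ_β = 0
    (hstat_σ : ∀ i, zbar i ^ 2 - zbar i - σ i / β = 0)
    -- complementarity conditions
    (hτ0 : 0 ≤ τ)
    (Pq : (Fin n → ℝ) → ℝ)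
    (hPq : Pq = fun z => (1 / 2) * (z ⬝ᵥ Q.mulVec z) - c ⬝ᵥ z) :
    ∀ z : Fin n → ℝ, (∀ i, z i = 0 ∨ z i = 1) → v ⬝ᵥ z ≤ Vc →
      Pq zbar ≤ Pq z := by
  intro z _ hz
  have hσ : σ = 0 := funext fun i =>
    eq_zero_of_sq_sub_self_sub_div_eq_zero hβ.ne' (hbin i) (hstat_σ i)
  have hGQ : G = Q := by simp [hG, hσ]
  have hstat : Q *ᵥ zbar = c - τ • v := by
    rw [← hGQ, hstat_z, hψ, hσ]
    ext i
    simp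
  rw [hPq]
  exact (hGQ ▸ hpd).posSemidef.quadratic_le_of_kkt hτ0 hstat hvol hz

/-- Complementary-dual principle: a KKT point of `Ξ_β` with binary analytic
solution `z̄ = G(σ)⁻¹ψ` and `vᵀz̄ = V_c` yields a global minimizer of the
quadratic knapsack problem. -/
theorem kkt_point_global_min_knapsack (n : ℕ) (β : ℝ) (hβ : 0 < β)
    (Q : Matrix (Fin n) (Fin n) ℝ) (hQ : Q.IsSymm)
    (c v σ : Fin n → ℝ) (τ Vc : ℝ)
    (G : Matrix (Fin n) (Fin n) ℝ) (hG : G = Q + 2 • Matrix.diagonal σ)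
    (hpd : G.PosDef) (hτ : 0 < τ)
    (ψ : Fin n → ℝ) (hψ : ψ = fun i => c i - τ * v i + σ i)
    (zbar : Fin n → ℝ) (hz : zbar = G⁻¹.mulVec ψ)
    (hbin : ∀ i, zbar i = 0 ∨ zbar i = 1)
    (hvol : v ⬝ᵥ zbar = Vc)
    -- KKT stationarity in z : ∇_z Ξ_β = 0
    (hstat_z : G.mulVec zbar = ψ)
    -- KKT stationarity in σ : ∇_σ Ξ_β = 0
    (hstat_σ : ∀ i, zbar i ^ 2 - zbar i - σ i / β = 0)
    -- complementarity conditions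
    (hfeas : v ⬝ᵥ zbar ≤ Vc) (hτ0 : 0 ≤ τ) (hcomp : τ * (v ⬝ᵥ zbar - Vc) = 0)
    (Pq : (Fin n → ℝ) → ℝ)
    (hPq : Pq = fun z => (1 / 2) * (z ⬝ᵥ Q.mulVec z) - c ⬝ᵥ z) :
    ∀ z : Fin n → ℝ, (∀ i, z i = 0 ∨ z i = 1) → v ⬝ᵥ z ≤ Vc →
      Pq zbar ≤ Pq z :=
  kkt_point_global_min_knapsack_general n β hβ Q c v σ τ Vc G hG hpd ψ hψ zbar hbin hvol hstat_z
    hstat_σ hτ0 Pq hPq
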